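/- Let G be a connected graph of order at least two and let I be a maximum independent set of G. Then γ(G) = β(G) if and only if: (1) each support vertex of G belonging to I is a weak support and each of its non-leaf neighbors is a support; (2) if uv is an edge of G with both u, v ∉ I, then both u and v are support vertices; and (3) if x, y are vertices not in I and neither leaves nor supports with d(x,y) = 2, then there exist two distinct vertices x̄, ȳ in I with N(x̄) = N(ȳ) = {x, y}. -/

import Mathlib

open Finset

variable {V : Type} [Fintype V] [DecidableEq V]

def IsDomSet (G : SimpleGraph V) (D : Finset V) : Prop :=
  ∀ v : V, v ∉ D → ∃ u ∈ D, G.Adj u v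

noncomputable def domNum (G : SimpleGraph V) : ℕ :=
  sInf {n | ∃ D : Finset V, IsDomSet G D ∧ D.card = n}

def IsVertexCover (G : SimpleGraph V) (C : Finset V) : Prop :=
  ∀ ⦃u v : V⦄, G.Adj u v → u ∈ C ∨ v ∈ C

noncomputable def coverNum (G : SimpleGraph V) : ℕ :=
  sInf {n | ∃ C : Finset V, IsVertexCover G C ∧ C.card = n}

def IsIndepFinset (G : SimpleGraph V) (I : Finset V) : Prop :=
  ∀ u ∈ I, ∀ v ∈ I, ¬ G.Adj u v

noncomputable def indepNum (G : SimpleGraph V) : ℕ :=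
  sSup {n | ∃ I : Finset V, IsIndepFinset G I ∧ I.card = n}

def IsLeaf (G : SimpleGraph V) [DecidableRel G.Adj] (v : V) : Prop :=
  G.degree v = 1

def IsSupport (G : SimpleGraph V) [DecidableRel G.Adj] (v : V) : Prop :=
  ∃ u, G.Adj v u ∧ IsLeaf G u

def IsWeakSupport (G : SimpleGraph V) [DecidableRel G.Adj] (v : V) : Prop :=
  ((G.neighborFinset v).filter fun l => G.degree l = 1).card = 1

def IsBipartition (G : SimpleGraph V) (A B : Finset V) : Prop :=
  A ∪ B = Finset.univ ∧ Disjoint A B ∧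
    ∀ ⦃u v : V⦄, G.Adj u v → (u ∈ A ∧ v ∈ B) ∨ (u ∈ B ∧ v ∈ A)

/-!
β(G) = |V \ I| by Gallai, and V \ I dominates G, so γ(G) ≤ β(G) always.

If one of the three conditions fails, some set X ⊆ V \ I can be traded for a smaller set Z
(Z = ∅ with |X| = 1, or Z = {z} with z ∈ I and |X| = 2) so that Z ∪ ((V \ I) \ X) still
dominates, hence γ < β.

Conversely, if the conditions hold and u ∈ V \ I lies outside a dominating set D, then D
contains a neighbour w ∈ I of u that has no external private neighbour other than u. Replacing
w by u keeps D dominating and of the same size; repeating this turns D into a dominating set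
containing V \ I, hence γ ≥ β.
-/

lemma SimpleGraph.dist_eq_two_iff {W : Type*} {H : SimpleGraph W} {u v : W} :
    H.dist u v = 2 ↔ u ≠ v ∧ ¬ H.Adj u v ∧ (H.commonNeighbors u v).Nonempty := by
  rw [← SimpleGraph.edist_eq_two_iff]
  constructor
  · intro h
    rw [← (SimpleGraph.Reachable.of_dist_ne_zero (by omega)).coe_dist_eq_edist, h]
    rfl
  · intro h
    have hr : H.Reachable u v := SimpleGraph.reachable_of_edist_ne_top (by simp [h])
    exact_mod_cast hr.coe_dist_eq_edist.trans h

section Leaves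

variable {G : SimpleGraph V} [DecidableRel G.Adj]

omit [DecidableEq V] in
lemma IsLeaf.eq_of_adj {l a b : V} (hl : IsLeaf G l) (ha : G.Adj l a) (hb : G.Adj l b) :
    a = b :=
  (SimpleGraph.degree_eq_one_iff_existsUnique_adj.mp hl).unique ha hb

omit [DecidableEq V] in
lemma isSupport_of_forall_adj_eq (hG : ∀ v, ∃ u, G.Adj v u) {w u : V}
    (h : ∀ t, G.Adj w t → t = u) : IsSupport G u := by
  obtain ⟨t, hwt⟩ := hG w
  obtain rfl := h t hwt
  exact ⟨w, hwt.symm, SimpleGraph.degree_eq_one_iff_existsUnique_adj.mpr ⟨t, hwt, h⟩⟩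

omit [DecidableEq V] in
lemma IsWeakSupport.eq_of_isLeaf {w a b : V} (hw : IsWeakSupport G w) (ha : G.Adj w a)
    (hb : G.Adj w b) (hla : IsLeaf G a) (hlb : IsLeaf G b) : a = b :=
  card_le_one.1 hw.le a (mem_filter.2 ⟨(G.mem_neighborFinset w a).2 ha, hla⟩)
    b (mem_filter.2 ⟨(G.mem_neighborFinset w b).2 hb, hlb⟩)

lemma neighborFinset_eq_pair_of_not_isSupport (hG : ∀ v, ∃ u, G.Adj v u) {w x y : V}
    (hx : ¬ IsSupport G x) (hy : ¬ IsSupport G y) (h : ∀ t, G.Adj w t → t = x ∨ t = y) :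
    G.neighborFinset w = {x, y} := by
  have hwx : G.Adj w x := by
    by_contra hwx
    exact hy (isSupport_of_forall_adj_eq hG fun t ht =>
      (h t ht).resolve_left (by rintro rfl; exact hwx ht))
  have hwy : G.Adj w y := by
    by_contra hwy
    exact hx (isSupport_of_forall_adj_eq hG fun t ht =>
      (h t ht).resolve_right (by rintro rfl; exact hwy ht))
  ext t
  simp only [SimpleGraph.mem_neighborFinset, mem_insert, mem_singleton]
  exact ⟨h t, by rintro (rfl | rfl) <;> assumption⟩

end Leaves

section GraphInvariants

variable {G : SimpleGraph V}

omit [Fintype V] [DecidableEq V] in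
lemma IsIndepFinset.notMem_of_adj {I : Finset V} (hI : IsIndepFinset G I) {v u : V}
    (hv : v ∈ I) (h : G.Adj v u) : u ∉ I :=
  fun hu => hI v hv u hu h

omit [DecidableEq V] in
lemma IsIndepFinset.card_le_indepNum {I : Finset V} (hI : IsIndepFinset G I) :
    I.card ≤ indepNum G :=
  le_csSup ⟨Fintype.card V, by rintro n ⟨J, -, rfl⟩; exact J.card_le_univ⟩ ⟨I, hI, rfl⟩

lemma IsIndepFinset.isVertexCover_compl {I : Finset V} (hI : IsIndepFinset G I) :
    IsVertexCover G (univ \ I) := by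
  intro u v huv
  by_contra! h
  simp only [mem_sdiff, mem_univ, true_and, not_not] at h
  exact hI u h.1 v h.2 huv

lemma IsVertexCover.isIndepFinset_compl {C : Finset V} (hC : IsVertexCover G C) :
    IsIndepFinset G (univ \ C) := by
  intro u hu v hv huv
  simp only [mem_sdiff, mem_univ, true_and] at hu hv
  exact (hC huv).elim hu hv

lemma coverNum_eq_card_compl {I : Finset V} (hI : IsIndepFinset G I)
    (hImax : I.card = indepNum G) : coverNum G = (univ \ I).card := by
  refine le_antisymm (Nat.sInf_le ⟨_, hI.isVertexCover_compl, rfl⟩) ?_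
  obtain ⟨C, hC, hCcard⟩ : coverNum G ∈ {n | ∃ C : Finset V, IsVertexCover G C ∧ C.card = n} :=
    Nat.sInf_mem ⟨_, univ, fun u _ _ => Or.inl (mem_univ u), rfl⟩
  have hle := hImax ▸ hC.isIndepFinset_compl.card_le_indepNum
  rw [card_univ_sdiff] at hle ⊢
  omega

lemma IsLeaf.adj_mem_of_notMem [DecidableRel G.Adj] {I : Finset V} (hI : IsIndepFinset G I)
    (hImax : I.card = indepNum G) {l s : V} (hl : IsLeaf G l) (hlI : l ∉ I) (hls : G.Adj l s) :
    s ∈ I := by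
  by_contra hsI
  have hind : IsIndepFinset G (insert l I) := by
    intro a ha b hb hab
    rcases mem_insert.1 ha with rfl | haI <;> rcases mem_insert.1 hb with rfl | hbI
    · exact G.irrefl hab
    · exact hsI (hl.eq_of_adj hab hls ▸ hbI)
    · exact hsI (hl.eq_of_adj hab.symm hls ▸ haI)
    · exact hI a haI b hbI hab
  have := hind.card_le_indepNum
  rw [card_insert_of_notMem hlI] at this
  omega

omit [Fintype V] [DecidableEq V] in
lemma domNum_le_card {D : Finset V} (hD : IsDomSet G D) : domNum G ≤ D.card :=
  Nat.sInf_le ⟨D, hD, rfl⟩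

omit [DecidableEq V] in
lemma exists_isDomSet_card_eq_domNum (G : SimpleGraph V) :
    ∃ D : Finset V, IsDomSet G D ∧ D.card = domNum G :=
  Nat.sInf_mem (s := {n | ∃ D : Finset V, IsDomSet G D ∧ D.card = n})
    ⟨_, univ, fun v hv => absurd (mem_univ v) hv, rfl⟩

lemma IsIndepFinset.isDomSet_compl (hG : ∀ v, ∃ u, G.Adj v u) {I : Finset V}
    (hI : IsIndepFinset G I) : IsDomSet G (univ \ I) := by
  intro v hv
  obtain ⟨u, hvu⟩ := hG v
  have hvI : v ∈ I := by simpa using hv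
  exact ⟨u, by simpa using hI.notMem_of_adj hvI hvu, hvu.symm⟩

lemma domNum_le_coverNum (hG : ∀ v, ∃ u, G.Adj v u) {I : Finset V} (hI : IsIndepFinset G I)
    (hImax : I.card = indepNum G) : domNum G ≤ coverNum G :=
  coverNum_eq_card_compl hI hImax ▸ domNum_le_card (hI.isDomSet_compl hG)

end GraphInvariants

section Conditions

variable (G : SimpleGraph V) [DecidableRel G.Adj] (I : Finset V)

def SupportCondition : Prop :=
  ∀ v ∈ I, IsSupport G v → IsWeakSupport G v ∧ ∀ u, G.Adj v u → ¬ IsLeaf G u → IsSupport G u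

def EdgeCondition : Prop :=
  ∀ u v : V, G.Adj u v → u ∉ I → v ∉ I → IsSupport G u ∧ IsSupport G v

def TwinCondition : Prop :=
  ∀ x y : V, x ∉ I → y ∉ I →
    ¬ IsLeaf G x → ¬ IsSupport G x → ¬ IsLeaf G y → ¬ IsSupport G y →
    G.dist x y = 2 →
    ∃ xb ∈ I, ∃ yb ∈ I, xb ≠ yb ∧ G.neighborFinset xb = {x, y} ∧ G.neighborFinset yb = {x, y}

end Conditions

section Forward

variable {G : SimpleGraph V} {I : Finset V}

lemma isDomSet_union_sdiff (hI : IsIndepFinset G I) {Z X : Finset V}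
    (hX : ∀ x ∈ X, ∃ t ∈ Z ∪ ((univ \ I) \ X), G.Adj t x)
    (hIZ : ∀ w ∈ I, w ∉ Z → ∃ t, G.Adj w t ∧ t ∉ X) :
    IsDomSet G (Z ∪ ((univ \ I) \ X)) := by
  intro v hv
  simp only [mem_union, mem_sdiff, mem_univ, true_and, not_or, not_and, not_not] at hv
  by_cases hvI : v ∈ I
  · obtain ⟨t, hvt, htX⟩ := hIZ v hvI hv.1
    exact ⟨t, mem_union_right _ (by simp [htX, hI.notMem_of_adj hvI hvt]), hvt.symm⟩
  · exact hX v (hv.2 hvI)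

lemma domNum_lt_coverNum_of_isDomSet (hI : IsIndepFinset G I) (hImax : I.card = indepNum G)
    {Z X : Finset V} (hXI : ∀ x ∈ X, x ∉ I) (hZX : Z.card < X.card)
    (hD : IsDomSet G (Z ∪ ((univ \ I) \ X))) : domNum G < coverNum G := by
  have hX : X ⊆ univ \ I := fun x hx => by simpa using hXI x hx
  have hXle := card_le_card hX
  calc domNum G ≤ (Z ∪ ((univ \ I) \ X)).card := domNum_le_card hD
    _ ≤ Z.card + ((univ \ I) \ X).card := card_union_le _ _
    _ = Z.card + ((univ \ I).card - X.card) := by rw [card_sdiff_of_subset hX]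
    _ < coverNum G := by rw [coverNum_eq_card_compl hI hImax]; omega

variable [DecidableRel G.Adj] (hG : ∀ v, ∃ u, G.Adj v u) (hI : IsIndepFinset G I)
  (hImax : I.card = indepNum G) (heq : domNum G = coverNum G)
include hG hI hImax heq

lemma isSupport_of_adj_of_notMem {u v : V} (huv : G.Adj u v) (hu : u ∉ I) (hv : v ∉ I) :
    IsSupport G u := by
  by_contra hsu
  refine (domNum_lt_coverNum_of_isDomSet hI hImax (Z := ∅) (X := {u}) (by simpa using hu)
    (by simp) (isDomSet_union_sdiff hI ?_ ?_)).ne heq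
  · simp only [mem_singleton, forall_eq]
    exact ⟨v, by simp [hv, huv.ne'], huv.symm⟩
  · intro w _ _
    by_contra! h
    exact hsu (isSupport_of_forall_adj_eq hG (by simpa using h))

lemma isWeakSupport_of_mem {v : V} (hv : v ∈ I) (hsv : IsSupport G v) : IsWeakSupport G v := by
  obtain ⟨l, hvl, hl⟩ := hsv
  have hpos : 0 < ((G.neighborFinset v).filter fun l => G.degree l = 1).card :=
    card_pos.2 ⟨l, mem_filter.2 ⟨(G.mem_neighborFinset v l).2 hvl, hl⟩⟩
  by_contra hne
  have h2 : 1 < ((G.neighborFinset v).filter fun l => G.degree l = 1).card := by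
    unfold IsWeakSupport at hne; omega
  obtain ⟨l₁, h₁, l₂, h₂, hl₁₂⟩ := one_lt_card.1 h2
  simp only [mem_filter, SimpleGraph.mem_neighborFinset] at h₁ h₂
  refine (domNum_lt_coverNum_of_isDomSet hI hImax (Z := {v}) (X := {l₁, l₂}) ?_
    (by simp [card_pair hl₁₂]) (isDomSet_union_sdiff hI ?_ ?_)).ne heq
  · simp [hI.notMem_of_adj hv h₁.1, hI.notMem_of_adj hv h₂.1]
  · simp [h₁.1, h₂.1]
  · intro w _ hwv
    obtain ⟨t, hwt⟩ := hG w
    refine ⟨t, hwt, ?_⟩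
    have hwv' : w ≠ v := by simpa using hwv
    simp only [mem_insert, mem_singleton]
    rintro (rfl | rfl)
    · exact hwv' (IsLeaf.eq_of_adj h₁.2 hwt.symm h₁.1.symm)
    · exact hwv' (IsLeaf.eq_of_adj h₂.2 hwt.symm h₂.1.symm)

lemma isSupport_of_adj_of_mem_of_isSupport {v u : V} (hv : v ∈ I) (hsv : IsSupport G v)
    (hvu : G.Adj v u) (hu : ¬ IsLeaf G u) : IsSupport G u := by
  obtain ⟨l, hvl, hl⟩ := hsv
  have hlu : l ≠ u := by rintro rfl; exact hu hl
  by_contra hsu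
  refine (domNum_lt_coverNum_of_isDomSet hI hImax (Z := {v}) (X := {l, u}) ?_
    (by simp [card_pair hlu]) (isDomSet_union_sdiff hI ?_ ?_)).ne heq
  · simp [hI.notMem_of_adj hv hvl, hI.notMem_of_adj hv hvu]
  · simp [hvl, hvu]
  · intro w _ hwv
    by_contra! h
    refine hsu (isSupport_of_forall_adj_eq hG (w := w) fun t hwt => ?_)
    rcases mem_insert.1 (h t hwt) with rfl | h
    · exact absurd (hl.eq_of_adj hwt.symm hvl.symm) (by simpa using hwv)
    · exact mem_singleton.1 h

lemma exists_twins_of_dist_eq_two {x y : V} (hx : x ∉ I) (hy : y ∉ I) (hsx : ¬ IsSupport G x)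
    (hsy : ¬ IsSupport G y) (hxy : G.dist x y = 2) :
    ∃ xb ∈ I, ∃ yb ∈ I, xb ≠ yb ∧
      G.neighborFinset xb = {x, y} ∧ G.neighborFinset yb = {x, y} := by
  by_contra! htwins
  obtain ⟨hne, -, c, hxc, hyc⟩ := SimpleGraph.dist_eq_two_iff.1 hxy
  -- Trading `x, y` for `z` only endangers the vertices of `I` with neighbourhood `{x, y}`.
  obtain ⟨z, hzI, hzx, hzy, hz⟩ : ∃ z ∈ I, G.Adj z x ∧ G.Adj z y ∧
      ∀ w ∈ I, G.neighborFinset w = {x, y} → w = z := by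
    by_cases h : ∃ z ∈ I, G.neighborFinset z = {x, y}
    · obtain ⟨z, hzI, hz⟩ := h
      refine ⟨z, hzI, ?_, ?_, fun w hwI hw => ?_⟩
      · simp [← SimpleGraph.mem_neighborFinset, hz]
      · simp [← SimpleGraph.mem_neighborFinset, hz]
      · by_contra hwz
        exact htwins w hwI z hzI hwz hw hz
    · have hcI : c ∈ I := by
        by_contra hcI
        exact hsx (isSupport_of_adj_of_notMem hG hI hImax heq hxc hx hcI)
      exact ⟨c, hcI, hxc.symm, hyc.symm, fun w hwI hw => absurd ⟨w, hwI, hw⟩ h⟩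
  refine (domNum_lt_coverNum_of_isDomSet hI hImax (Z := {z}) (X := {x, y}) ?_
    (by simp [card_pair hne]) (isDomSet_union_sdiff hI ?_ ?_)).ne heq
  · simp [hx, hy]
  · simp [hzx, hzy]
  · intro w hwI hwz
    by_contra! h
    exact hwz (mem_singleton.2 (hz w hwI
      (neighborFinset_eq_pair_of_not_isSupport hG hsx hsy fun t ht => by simpa using h t ht)))

lemma supportCondition_of_domNum_eq : SupportCondition G I := fun _ hv hsv =>
  ⟨isWeakSupport_of_mem hG hI hImax heq hv hsv,
    fun _ hvu hu => isSupport_of_adj_of_mem_of_isSupport hG hI hImax heq hv hsv hvu hu⟩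

lemma edgeCondition_of_domNum_eq : EdgeCondition G I := fun _ _ huv hu hv =>
  ⟨isSupport_of_adj_of_notMem hG hI hImax heq huv hu hv,
    isSupport_of_adj_of_notMem hG hI hImax heq huv.symm hv hu⟩

lemma twinCondition_of_domNum_eq : TwinCondition G I := fun _ _ hx hy _ hsx _ hsy hxy =>
  exists_twins_of_dist_eq_two hG hI hImax heq hx hy hsx hsy hxy

end Forward

section Backward

variable {G : SimpleGraph V} {I D : Finset V} {u : V}

def NoPrivateNeighborExcept (G : SimpleGraph V) (D : Finset V) (w u : V) : Prop :=
  ∀ x, G.Adj w x → x ≠ u → x ∉ D → ∃ d ∈ D, d ≠ w ∧ G.Adj d x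

omit [Fintype V] in
lemma IsDomSet.insert_erase (hD : IsDomSet G D) {w : V} (huw : G.Adj u w)
    (hw : NoPrivateNeighborExcept G D w u) : IsDomSet G (insert u (D.erase w)) := by
  intro v hv
  simp only [mem_insert, mem_erase, not_or, not_and] at hv
  by_cases hvw : v = w
  · subst hvw
    exact ⟨u, mem_insert_self _ _, huw⟩
  have hvD : v ∉ D := hv.2 hvw
  obtain ⟨d, hdD, hdv⟩ := hD v hvD
  by_cases hdw : d = w
  · subst hdw
    obtain ⟨d', hd'D, hd'w, hd'v⟩ := hw v hdv hv.1 hvD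
    exact ⟨d', mem_insert_of_mem (mem_erase.2 ⟨hd'w, hd'D⟩), hd'v⟩
  · exact ⟨d, mem_insert_of_mem (mem_erase.2 ⟨hdw, hdD⟩), hdv⟩

variable [DecidableRel G.Adj]

lemma IsDomSet.mem_of_disjoint_neighborFinset (hD : IsDomSet G D) {c : V}
    (h : Disjoint (G.neighborFinset c) D) : c ∈ D := by
  by_contra hcD
  obtain ⟨d, hdD, hdc⟩ := hD c hcD
  exact disjoint_left.1 h ((G.mem_neighborFinset c d).2 hdc.symm) hdD

lemma IsLeaf.mem_of_isDomSet (hD : IsDomSet G D) {l x : V}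
    (hl : IsLeaf G l) (hlx : G.Adj l x) (hx : x ∉ D) : l ∈ D := by
  by_contra hlD
  obtain ⟨d, hdD, hdl⟩ := hD l hlD
  exact hx (hl.eq_of_adj hdl.symm hlx ▸ hdD)

lemma exists_mem_ne_adj_of_isSupport (hD : IsDomSet G D) {w u x : V}
    (hwu : G.Adj w u) (hwx : G.Adj w x) (hux : u ≠ x) (hsx : IsSupport G x) (hxD : x ∉ D) :
    ∃ d ∈ D, d ≠ w ∧ G.Adj d x := by
  obtain ⟨l, hxl, hl⟩ := hsx
  refine ⟨l, hl.mem_of_isDomSet hD hxl.symm hxD, ?_, hxl.symm⟩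
  rintro rfl
  exact hux (hl.eq_of_adj hwu hwx)

lemma exists_exchange_of_isLeaf (hI : IsIndepFinset G I) (hImax : I.card = indepNum G)
    (h1 : SupportCondition G I) (hD : IsDomSet G D) (huI : u ∉ I) (huD : u ∉ D)
    (hu : IsLeaf G u) : ∃ w ∈ D, w ∈ I ∧ G.Adj u w ∧ NoPrivateNeighborExcept G D w u := by
  obtain ⟨w, hwD, hwu⟩ := hD u huD
  have hwI : w ∈ I := hu.adj_mem_of_notMem hI hImax huI hwu.symm
  refine ⟨w, hwD, hwI, hwu.symm, fun x hwx hxu hxD => ?_⟩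
  obtain ⟨hw, hsupp⟩ := h1 w hwI ⟨u, hwu, hu⟩
  have hx : ¬ IsLeaf G x := fun hx => hxu (hw.eq_of_isLeaf hwx hwu hx hu)
  exact exists_mem_ne_adj_of_isSupport hD hwu hwx (Ne.symm hxu) (hsupp x hwx hx) hxD

lemma exists_exchange_of_isSupport (hI : IsIndepFinset G I) (hImax : I.card = indepNum G)
    (hD : IsDomSet G D) (huI : u ∉ I) (huD : u ∉ D) (hsu : IsSupport G u) :
    ∃ w ∈ D, w ∈ I ∧ G.Adj u w ∧ NoPrivateNeighborExcept G D w u := by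
  obtain ⟨l, hul, hl⟩ := hsu
  have hlI : l ∈ I := by
    by_contra hlI
    exact huI (hl.adj_mem_of_notMem hI hImax hlI hul.symm)
  exact ⟨l, hl.mem_of_isDomSet hD hul.symm huD, hlI, hul,
    fun x hlx hxu _ => absurd (hl.eq_of_adj hlx hul.symm) hxu⟩

lemma exists_exchange_of_not_isSupport (hI : IsIndepFinset G I) (h1 : SupportCondition G I)
    (h2 : EdgeCondition G I) (h3 : TwinCondition G I) (hD : IsDomSet G D) (huI : u ∉ I)
    (huD : u ∉ D) (hu : ¬ IsLeaf G u) (hsu : ¬ IsSupport G u) :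
    ∃ w ∈ D, w ∈ I ∧ G.Adj u w ∧ NoPrivateNeighborExcept G D w u := by
  obtain ⟨w, hwD, hwu⟩ := hD u huD
  have hwI : w ∈ I := by
    by_contra hwI
    exact hsu (h2 u w hwu.symm huI hwI).1
  refine ⟨w, hwD, hwI, hwu.symm, fun x hwx hxu hxD => ?_⟩
  have hxI := hI.notMem_of_adj hwI hwx
  by_cases hsx : IsSupport G x
  · exact exists_mem_ne_adj_of_isSupport hD hwu hwx (Ne.symm hxu) hsx hxD
  have hx : ¬ IsLeaf G x := fun hx => hsu ((h1 w hwI ⟨x, hwx, hx⟩).2 u hwu hu)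
  have hux : G.dist u x = 2 := SimpleGraph.dist_eq_two_iff.2
    ⟨Ne.symm hxu, fun h => hsu (h2 u x h huI hxI).1, w, hwu.symm, hwx.symm⟩
  obtain ⟨a, -, b, -, hab, ha, hb⟩ := h3 u x huI hxI hu hsu hx hsx hux
  have hmem : ∀ c, G.neighborFinset c = {u, x} → c ∈ D := fun c hc =>
    hD.mem_of_disjoint_neighborFinset (by simp [hc, huD, hxD])
  have hadj : ∀ c, G.neighborFinset c = {u, x} → G.Adj c x := fun c hc =>
    (G.mem_neighborFinset c x).1 (by simp [hc])
  by_cases haw : a = w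
  · exact ⟨b, hmem b hb, fun hbw => hab (haw.trans hbw.symm), hadj b hb⟩
  · exact ⟨a, hmem a ha, haw, hadj a ha⟩

lemma exists_exchange (hI : IsIndepFinset G I) (hImax : I.card = indepNum G)
    (h1 : SupportCondition G I) (h2 : EdgeCondition G I) (h3 : TwinCondition G I)
    (hD : IsDomSet G D) (huI : u ∉ I) (huD : u ∉ D) :
    ∃ w ∈ D, w ∈ I ∧ G.Adj u w ∧ NoPrivateNeighborExcept G D w u := by
  by_cases hu : IsLeaf G u
  · exact exists_exchange_of_isLeaf hI hImax h1 hD huI huD hu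
  by_cases hsu : IsSupport G u
  · exact exists_exchange_of_isSupport hI hImax hD huI huD hsu
  · exact exists_exchange_of_not_isSupport hI h1 h2 h3 hD huI huD hu hsu

lemma card_compl_le_card_of_isDomSet (hI : IsIndepFinset G I) (hImax : I.card = indepNum G)
    (h1 : SupportCondition G I) (h2 : EdgeCondition G I) (h3 : TwinCondition G I)
    (hD : IsDomSet G D) : (univ \ I).card ≤ D.card := by
  induction hn : ((univ \ I) \ D).card generalizing D with
  | zero => exact card_le_card (sdiff_eq_empty_iff_subset.1 (card_eq_zero.1 hn))
  | succ n ih =>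
    obtain ⟨u, hu⟩ : ((univ \ I) \ D).Nonempty := card_pos.1 (by omega)
    simp only [mem_sdiff, mem_univ, true_and] at hu
    obtain ⟨w, hwD, hwI, huw, hw⟩ := exists_exchange hI hImax h1 h2 h3 hD hu.1 hu.2
    have hcard : (insert u (D.erase w)).card = D.card := by
      rw [card_insert_of_notMem (fun h => hu.2 (mem_of_mem_erase h)), card_erase_add_one hwD]
    have hrest : (univ \ I) \ insert u (D.erase w) = ((univ \ I) \ D).erase u := by
      ext t
      simp only [mem_sdiff, mem_univ, true_and, mem_insert, mem_erase]
      grind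
    rw [← hcard]
    refine ih (hD.insert_erase huw hw) ?_
    rw [hrest, card_erase_of_mem (by simpa using hu), hn, Nat.add_sub_cancel]

end Backward

theorem domNum_eq_coverNum_characterization (G : SimpleGraph V) [DecidableRel G.Adj]
    (hconn : G.Connected) (hcard : 2 ≤ Fintype.card V)
    (I : Finset V) (hI : IsIndepFinset G I) (hImax : I.card = indepNum G) :
    domNum G = coverNum G ↔
      ((∀ v ∈ I, IsSupport G v →
          IsWeakSupport G v ∧ ∀ u, G.Adj v u → ¬ IsLeaf G u → IsSupport G u) ∧
       (∀ u v : V, G.Adj u v → u ∉ I → v ∉ I → IsSupport G u ∧ IsSupport G v) ∧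
       (∀ x y : V, x ∉ I → y ∉ I →
          ¬ IsLeaf G x → ¬ IsSupport G x → ¬ IsLeaf G y → ¬ IsSupport G y →
          G.dist x y = 2 →
          ∃ xb ∈ I, ∃ yb ∈ I, xb ≠ yb ∧
            G.neighborFinset xb = {x, y} ∧ G.neighborFinset yb = {x, y})) := by
  have : Nontrivial V := Fintype.one_lt_card_iff_nontrivial.mp hcard
  have hG : ∀ v, ∃ u, G.Adj v u := hconn.preconnected.exists_adj_of_nontrivial
  refine ⟨fun heq => ⟨supportCondition_of_domNum_eq hG hI hImax heq,
    edgeCondition_of_domNum_eq hG hI hImax heq, twinCondition_of_domNum_eq hG hI hImax heq⟩, ?_⟩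
  rintro ⟨h1, h2, h3⟩
  obtain ⟨D, hD, hDcard⟩ := exists_isDomSet_card_eq_domNum G
  refine le_antisymm (domNum_le_coverNum hG hI hImax) ?_
  rw [coverNum_eq_card_compl hI hImax, ← hDcard]
  exact card_compl_le_card_of_isDomSet hI hImax h1 h2 h3 hD
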